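/- arXiv:math/0507373 — 2 statements merged into one kernel-verified Lean document; each statement's English description precedes it below -/
import Mathlib

section
/- If a unital commutative Banach algebra is topologically generated by its idempotent elements, then it is weakly amenable. -/
/-- If a unital commutative Banach algebra is topologically generated by its
idempotents, then it is weakly amenable: every bounded derivation into any
symmetric Banach bimodule is zero.  A symmetric Banach `A`-bimodule is encoded by a
completely general bounded action `ρ : A →L[ℂ] V →L[ℂ] V` with `ρ (a*b) = ρ a ∘ ρ b`
(both module actions coincide by symmetry). -/
theorem weaklyAmenable_of_generated_by_idempotents
    {A : Type*} [NormedCommRing A] [NormedAlgebra ℂ A] [CompleteSpace A]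
    (hgen : (Algebra.adjoin ℂ {e : A | e * e = e}).topologicalClosure = ⊤) :
    ∀ (V : Type) [NormedAddCommGroup V] [NormedSpace ℂ V] [CompleteSpace V]
      (ρ : A →L[ℂ] V →L[ℂ] V), (∀ a b v, ρ (a * b) v = ρ a (ρ b v)) →
      ∀ D : A →L[ℂ] V, (∀ a b, D (a * b) = ρ a (D b) + ρ b (D a)) → D = 0 := by
  intro V _ _ _ ρ hρ D hD
  -- D vanishes on idempotents
  have hidem : ∀ e : A, e * e = e → D e = 0 := by
    intro e he
    have h1 : D e = ρ e (D e) + ρ e (D e) := by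
      conv_lhs => rw [← he]
      exact hD e e
    have h2 : ρ e (ρ e (D e)) = ρ e (D e) := by
      rw [← hρ e e (D e), he]
    have h3 : ρ e (D e) = ρ e (D e) + ρ e (D e) := by
      conv_lhs => rw [h1]
      rw [map_add, h2]
    have h4 : ρ e (D e) = 0 := add_eq_left.mp h3.symm
    rw [h1, h4, add_zero]
  -- D vanishes on the subalgebra generated by idempotents
  have hadj : ∀ x ∈ Algebra.adjoin ℂ {e : A | e * e = e}, D x = 0 := by
    intro x hx
    induction hx using Algebra.adjoin_induction with
    | mem e he => exact hidem e he
    | algebraMap c =>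
        have h1 : D (1 : A) = 0 := hidem 1 (one_mul 1)
        rw [Algebra.algebraMap_eq_smul_one, map_smul, h1, smul_zero]
    | add a b _ _ ha hb => rw [map_add, ha, hb, add_zero]
    | mul a b _ _ ha hb => rw [hD a b, ha, hb, map_zero, map_zero, add_zero]
  -- pass to the closure
  ext a
  have ha : a ∈ (Algebra.adjoin ℂ {e : A | e * e = e}).topologicalClosure := by
    rw [hgen]; trivial
  have hsub : closure ((Algebra.adjoin ℂ {e : A | e * e = e} : Subalgebra ℂ A) : Set A)
      ⊆ D ⁻¹' {0} := by
    apply closure_minimal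
    · intro x hx; exact hadj x hx
    · exact isClosed_singleton.preimage D.continuous
  exact hsub ha
end

section
/- Let A be a Banach algebra that is an ℓ¹-direct sum A = ⊕_{i∈I} A_i of closed subalgebras such that every bounded derivation from each A_i into any symmetric Banach A-bimodule (restricted along the inclusion A_i ↪ A) vanishes. Then every bounded derivation from A into any symmetric Banach A-bimodule vanishes, i.e., A is weakly amenable. -/
/-- Let a commutative Banach algebra `A` be the `ℓ¹`-direct sum of closed subalgebras
`A_i` (with decomposition map `c`), such that every bounded derivation from each `A_i`
into any symmetric Banach `A`-bimodule (restricted along `A_i ↪ A`) vanishes.  Then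
every bounded derivation from `A` into any symmetric Banach `A`-bimodule vanishes,
i.e. `A` is weakly amenable.  A symmetric Banach `A`-bimodule is encoded by a bounded
action `ρ : A →L[ℂ] V →L[ℂ] V` with `ρ (a*b) = ρ a ∘ ρ b` (both actions coincide by
symmetry). -/
theorem weaklyAmenable_of_l1_sum_of_subalgebras
    {A : Type} [NonUnitalNormedCommRing A] [NormedSpace ℂ A] [CompleteSpace A]
    {ι : Type} (As : ι → Submodule ℂ A) (hclosed : ∀ i, IsClosed (As i : Set A))
    (hmul : ∀ i, ∀ a ∈ As i, ∀ b ∈ As i, a * b ∈ As i)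
    (c : A → ι → A) (hc_mem : ∀ a i, c a i ∈ As i)
    (hc_sum : ∀ a, HasSum (fun i => c a i) a)
    (hc_norm : ∀ a, HasSum (fun i => ‖c a i‖) ‖a‖)
    (h : ∀ (V : Type) [NormedAddCommGroup V] [NormedSpace ℂ V] [CompleteSpace V],
      ∀ ρ : A →L[ℂ] V →L[ℂ] V, (∀ a b v, ρ (a * b) v = ρ a (ρ b v)) →
        ∀ (i : ι) (D : (As i) →L[ℂ] V),
          (∀ x y : As i,
            D ⟨(x : A) * (y : A), hmul i x x.2 y y.2⟩ = ρ (x : A) (D y) + ρ (y : A) (D x)) →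
          D = 0) :
    ∀ (V : Type) [NormedAddCommGroup V] [NormedSpace ℂ V] [CompleteSpace V],
      ∀ ρ : A →L[ℂ] V →L[ℂ] V, (∀ a b v, ρ (a * b) v = ρ a (ρ b v)) →
        ∀ D : A →L[ℂ] V, (∀ a b, D (a * b) = ρ a (D b) + ρ b (D a)) → D = 0 := by
  intro V _ _ _ ρ hρ D hD
  ext a
  have key : ∀ i, ∀ x ∈ As i, D x = 0 := by
    intro i x hx
    have h0 := h V ρ hρ i (D.comp (As i).subtypeL) (by
      intro x y
      simpa using hD x y)
    have := congrArg (fun f : (As i) →L[ℂ] V => f ⟨x, hx⟩) h0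
    simpa using this
  have hsum : HasSum (fun i => D (c a i)) (D a) := (hc_sum a).mapL D
  have hzero : HasSum (fun i : ι => D (c a i)) 0 := by
    have : (fun i : ι => D (c a i)) = fun _ => (0 : V) := by
      funext i; exact key i _ (hc_mem a i)
    rw [this]; exact hasSum_zero
  simpa using hsum.unique hzero
end
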